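/- Let G = (x + Σ_{n≥2} p_n, y + Σ_{n≥2} q_n) be a formal diffeomorphism tangent to the identity (p_n, q_n homogeneous of degree n). Define recursively homogeneous vector fields by: a_{m+1} = p_{m+1} − HT_{m+1}(Σ_{j=2}^{m} (1/j!) X_m^j(x)) and b_{m+1} = q_{m+1} − HT_{m+1}(Σ_{j=2}^{m} (1/j!) X_m^j(y)), where X_m = Σ_{n=2}^{m} (a_n ∂/∂x + b_n ∂/∂y) and HT_{m+1} takes the homogeneous part of degree m+1. Then X = Σ_{n≥2}(a_n ∂/∂x + b_n ∂/∂y) is the unique formal vector field of order ≥ 2 with Exp(X) = G. -/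

import Mathlib

open Finsupp

noncomputable section

abbrev F2 : Type := MvPowerSeries (Fin 2) ℂ

/-- total degree of a monomial exponent -/
def deg (d : Fin 2 →₀ ℕ) : ℕ := d 0 + d 1

/-- the exponent (m, n) -/
def idx (m n : ℕ) : Fin 2 →₀ ℕ := Finsupp.single 0 m + Finsupp.single 1 n

/-- partial derivative of a formal power series -/
def pd (i : Fin 2) (f : F2) : F2 :=
  fun d => ((d i : ℂ) + 1) * MvPowerSeries.coeff (d + Finsupp.single i 1) f

/-- the derivation a ∂/∂x + b ∂/∂y applied to g -/
def vf (a b g : F2) : F2 := a * pd 0 g + b * pd 1 g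

/-- `ordGE f k` : the order ν(f) is at least k -/
def ordGE (f : F2) (k : ℕ) : Prop :=
  ∀ d : Fin 2 →₀ ℕ, deg d < k → MvPowerSeries.coeff d f = 0

/-- exp X (g) = Σ_j (1/j!) X^j(g), coefficientwise -/
def expX (a b g : F2) : F2 :=
  fun d => ∑' j : ℕ, ((j.factorial : ℂ))⁻¹ * MvPowerSeries.coeff d ((vf a b)^[j] g)

/-- degree-k homogeneous part -/
def HT (k : ℕ) (f : F2) : F2 :=
  fun d => if deg d = k then MvPowerSeries.coeff d f else 0

/-- substitution y := x·v :  f(x, xv), in coordinates (x, v) -/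
def blowup (f : F2) : F2 :=
  fun d => if d 1 ≤ d 0 then MvPowerSeries.coeff (idx (d 0 - d 1) (d 1)) f else 0

/-- `dehom k f` = f_k(1, v), where f_k is the degree-k homogeneous part of f -/
def dehom (k : ℕ) (f : F2) : F2 :=
  fun d => if d 0 = 0 ∧ d 1 ≤ k then MvPowerSeries.coeff (idx (k - d 1) (d 1)) f else 0

/-- evaluation of the degree-k homogeneous part of f at (1, v0) -/
def evk (k : ℕ) (v0 : ℂ) (f : F2) : ℂ :=
  ∑ n ∈ Finset.range (k+1), MvPowerSeries.coeff (idx (k-n) n) f * v0 ^ n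

/-- the linear change of coordinates f(x, y) ↦ f(x, y + v0·x) -/
def shear (v0 : ℂ) (f : F2) : F2 :=
  fun d => ∑ j ∈ Finset.range (deg d + 1),
    if d 1 ≤ j ∧ j - d 1 ≤ d 0 then
      (j.choose (d 1) : ℂ) * v0 ^ (j - d 1) *
        MvPowerSeries.coeff (idx (d 0 - (j - d 1)) j) f
    else 0

/-- the coordinate x -/
def Xv : F2 := MvPowerSeries.X 0
/-- the coordinate y (alias v in the blow-up chart) -/
def Yv : F2 := MvPowerSeries.X 1

end

noncomputable section

/-- reassemble a sequence of homogeneous pieces into a power series -/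
noncomputable def totalize (a : ℕ → F2) : F2 :=
  fun d => MvPowerSeries.coeff d (a (deg d))

/-! A vector field of order `≥ 2` raises the order of a series by at least one, so in degree
`m + 1` the series `Exp(X)(x) = x + X(x) + Σ_{j ≥ 2} X^j(x) / j!` has the degree-`(m + 1)` part
of `X(x) = a` plus that of `Σ_{j=2}^m X^j(x) / j!`, and the latter only involves the parts of `X`
of degree `≤ m`. Hence `Exp(X) = G` is equivalent to the recursion, which determines `X`
degree by degree. -/

open MvPowerSeries

lemma deg_eq_degree (d : Fin 2 →₀ ℕ) : deg d = d.degree := by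
  rw [Finsupp.degree_eq_sum, Fin.sum_univ_two, deg]

lemma deg_add (d e : Fin 2 →₀ ℕ) : deg (d + e) = deg d + deg e := by
  simp only [deg_eq_degree, map_add]

lemma deg_single_one (i : Fin 2) : deg (Finsupp.single i 1) = 1 := by
  rw [deg_eq_degree, Finsupp.degree_single]

lemma pd_eq_pderiv (i : Fin 2) (f : F2) : pd i f = pderiv ℂ i f := by
  ext d
  rw [coeff_pderiv, mul_comm]
  rfl

lemma vf_Xv (A B : F2) : vf A B Xv = A := by
  simp [vf, Xv, pd_eq_pderiv]

lemma vf_Yv (A B : F2) : vf A B Yv = B := by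
  simp [vf, Yv, pd_eq_pderiv]

@[simp]
lemma vf_zero (A B : F2) : vf A B 0 = 0 := by
  simp [vf, pd_eq_pderiv]

lemma vf_sub_vf (A B A' B' f f' : F2) :
    vf A B f - vf A' B' f' = vf A B (f - f') + vf (A - A') (B - B') f' := by
  simp only [vf, pd_eq_pderiv, map_sub]
  ring

lemma coeff_X_of_deg_ne_one (i : Fin 2) {d : Fin 2 →₀ ℕ} (hd : deg d ≠ 1) :
    coeff d (X i : F2) = 0 := by
  rw [coeff_X, if_neg]
  rintro rfl
  exact hd (deg_single_one i)

section ordGE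

variable {f g : F2} {k l : ℕ}

lemma ordGE_iff_le_order : ordGE f k ↔ (k : ℕ∞) ≤ f.order := by
  refine ⟨fun h => nat_le_order fun d hd => h d ?_, fun h d hd => coeff_of_lt_order ?_⟩
  · rwa [deg_eq_degree]
  · exact lt_of_lt_of_le (by rw [← deg_eq_degree]; exact_mod_cast hd) h

lemma ordGE.mono (hf : ordGE f k) (hlk : l ≤ k) : ordGE f l :=
  fun d hd => hf d (hd.trans_le hlk)

lemma ordGE.add (hf : ordGE f k) (hg : ordGE g k) : ordGE (f + g) k :=
  fun d hd => by rw [map_add, hf d hd, hg d hd, add_zero]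

lemma ordGE.mul (hf : ordGE f k) (hg : ordGE g l) : ordGE (f * g) (k + l) := by
  rw [ordGE_iff_le_order] at *
  push_cast
  exact (add_le_add hf hg).trans le_order_mul

lemma ordGE.pd (hg : ordGE g k) (i : Fin 2) : ordGE (pd i g) (k - 1) := by
  intro d hd
  rw [pd_eq_pderiv, coeff_pderiv, hg _ (by rw [deg_add, deg_single_one]; omega), zero_mul]

end ordGE

section vf

variable {A B A' B' g : F2} {s t k : ℕ}

lemma ordGE.vf (hA : ordGE A s) (hB : ordGE B s) (hg : ordGE g k) :
    ordGE (vf A B g) (s + (k - 1)) :=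
  (hA.mul (hg.pd 0)).add (hB.mul (hg.pd 1))

lemma ordGE_iterate_vf (hA : ordGE A 2) (hB : ordGE B 2) (hg : ordGE g k) (j : ℕ) :
    ordGE ((vf A B)^[j] g) (k + j) := by
  induction j with
  | zero => exact hg
  | succ j ih =>
    rw [Function.iterate_succ_apply']
    exact (hA.vf hB ih).mono (by omega)

lemma ordGE_iterate_vf_sub (hA : ordGE A 2) (hB : ordGE B 2) (hA' : ordGE A' 2)
    (hB' : ordGE B' 2) (hdA : ordGE (A - A') t) (hdB : ordGE (B - B') t) (hg : ordGE g k)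
    (j : ℕ) : ordGE ((vf A B)^[j + 1] g - (vf A' B')^[j + 1] g) (t + k + j - 1) := by
  induction j with
  | zero => simpa [vf_sub_vf] using (hdA.vf hdB hg).mono (by omega)
  | succ j ih =>
    rw [Function.iterate_succ_apply' _ (j + 1), Function.iterate_succ_apply' _ (j + 1),
      vf_sub_vf]
    refine ((hA.vf hB ih).mono ?_).add ((hdA.vf hdB (ordGE_iterate_vf hA' hB' hg _)).mono ?_)
    · omega
    · omega

end vf

def truncDeg (m : ℕ) (A : F2) : F2 := ∑ n ∈ Finset.Icc 2 m, HT n A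

def expPartialSum (m : ℕ) (A B g : F2) : F2 :=
  ∑ j ∈ Finset.Icc 2 m, ((j.factorial : ℂ))⁻¹ • (vf A B)^[j] g

section HT

variable {f f' : F2} {k : ℕ}

lemma coeff_HT (d : Fin 2 →₀ ℕ) : coeff d (HT k f) = if deg d = k then coeff d f else 0 := rfl

lemma HT_sub : HT k f - HT k f' = HT k (f - f') := by
  ext d
  simp only [map_sub, coeff_HT]
  split_ifs <;> simp

lemma HT_eq_HT_iff : HT k f = HT k f' ↔ ∀ d, deg d = k → coeff d f = coeff d f' := by
  refine ⟨fun h d hd => ?_, fun h => ext fun d => ?_⟩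
  · simpa [coeff_HT, hd] using congrArg (coeff d) h
  · simp only [coeff_HT]
    split_ifs with hd
    exacts [h d hd, rfl]

lemma HT_eq_zero (hf : ordGE f 2) (hk : k < 2) : HT k f = 0 := by
  ext d
  rw [coeff_HT, map_zero]
  split_ifs with hd
  exacts [hf d (hd ▸ hk), rfl]

lemma eq_of_forall_HT_eq (h : ∀ k, HT k f = HT k f') : f = f' :=
  ext fun d => HT_eq_HT_iff.1 (h (deg d)) d rfl

end HT

section truncDeg

variable {A : F2} {m : ℕ}

lemma coeff_truncDeg (d : Fin 2 →₀ ℕ) :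
    coeff d (truncDeg m A) = if deg d ∈ Finset.Icc 2 m then coeff d A else 0 := by
  rw [truncDeg, map_sum]
  exact Finset.sum_ite_eq (Finset.Icc 2 m) (deg d) (fun _ => coeff d A)

lemma ordGE_truncDeg : ordGE (truncDeg m A) 2 := by
  intro d hd
  rw [coeff_truncDeg, if_neg]
  simp only [Finset.mem_Icc]
  omega

lemma ordGE_sub_truncDeg (hA : ordGE A 2) : ordGE (A - truncDeg m A) (m + 1) := by
  intro d hd
  rw [map_sub, coeff_truncDeg]
  split_ifs with h
  · exact sub_self _
  · rw [sub_zero]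
    simp only [Finset.mem_Icc] at h
    exact hA d (by omega)

lemma truncDeg_congr {A' : F2} (h : ∀ n ≤ m, HT n A = HT n A') :
    truncDeg m A = truncDeg m A' :=
  Finset.sum_congr rfl fun n hn => h n (Finset.mem_Icc.1 hn).2

end truncDeg

section expX

variable {A B g : F2} {d : Fin 2 →₀ ℕ}

lemma coeff_expX (hA : ordGE A 2) (hB : ordGE B 2) (g : F2) (d : Fin 2 →₀ ℕ) :
    coeff d (expX A B g) =
      ∑ j ∈ Finset.range (deg d + 1), ((j.factorial : ℂ))⁻¹ * coeff d ((vf A B)^[j] g) := by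
  refine tsum_eq_sum fun j hj => ?_
  rw [Finset.mem_range, not_lt] at hj
  rw [ordGE_iterate_vf hA hB (k := 0) (fun _ h => (Nat.not_lt_zero _ h).elim) j d (by omega),
    mul_zero]

lemma coeff_expX_of_deg_lt_two (hA : ordGE A 2) (hB : ordGE B 2) (hg : ordGE g 1)
    (hd : deg d < 2) : coeff d (expX A B g) = coeff d g := by
  rw [coeff_expX hA hB, Finset.sum_eq_single 0]
  · simp
  · intro j _ hj
    rw [ordGE_iterate_vf hA hB hg j d (by omega), mul_zero]
  · simp

/-- In degree `m + 1` the terms `j ≥ m + 1` of the exponential vanish, and in the terms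
`2 ≤ j ≤ m` the vector field may be truncated to degree `m`. -/
lemma coeff_expX_of_deg_eq_succ (hA : ordGE A 2) (hB : ordGE B 2)
    (hg : ∀ e, deg e ≠ 1 → coeff e g = 0) {m : ℕ} (hm : 1 ≤ m) (hd : deg d = m + 1) :
    coeff d (expX A B g) =
      coeff d (vf A B g) + coeff d (expPartialSum m (truncDeg m A) (truncDeg m B) g) := by
  have hg1 : ordGE g 1 := fun e he => hg e (by omega)
  have hsplit :
      Finset.range (m + 1 + 1) = insert 0 (insert 1 (insert (m + 1) (Finset.Icc 2 m))) := by
    ext j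
    simp only [Finset.mem_range, Finset.mem_insert, Finset.mem_Icc]
    omega
  rw [coeff_expX hA hB, hd, hsplit, Finset.sum_insert (by simp),
    Finset.sum_insert (by simp; omega), Finset.sum_insert (by simp)]
  simp only [Function.iterate_zero_apply, Function.iterate_one, hg d (by omega),
    ordGE_iterate_vf hA hB hg1 (m + 1) d (by omega)]
  simp only [expPartialSum, map_sum, map_smul, smul_eq_mul, mul_zero, Nat.factorial_one,
    Nat.cast_one, inv_one, one_mul, zero_add]
  congr 1
  refine Finset.sum_congr rfl fun j hj => congrArg _ (sub_eq_zero.1 ?_)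
  obtain ⟨hj2, hjm⟩ := Finset.mem_Icc.1 hj
  obtain ⟨i, rfl⟩ : ∃ i, j = i + 1 := ⟨j - 1, by omega⟩
  rw [← map_sub]
  exact ordGE_iterate_vf_sub hA hB ordGE_truncDeg ordGE_truncDeg (ordGE_sub_truncDeg hA)
    (ordGE_sub_truncDeg hB) hg1 i d (by omega)

end expX

lemma expX_eq_add_iff {A B g P : F2} (hA : ordGE A 2) (hB : ordGE B 2)
    (hg : ∀ e, deg e ≠ 1 → coeff e g = 0) (hP : ordGE P 2) :
    expX A B g = g + P ↔ ∀ m ≥ 1, HT (m + 1) (vf A B g) =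
      HT (m + 1) P - HT (m + 1) (expPartialSum m (truncDeg m A) (truncDeg m B) g) := by
  have hg1 : ordGE g 1 := fun e he => hg e (by omega)
  rw [MvPowerSeries.ext_iff]
  constructor
  · intro h m hm
    rw [HT_sub, HT_eq_HT_iff]
    intro d hd
    have hexp := h d
    rw [coeff_expX_of_deg_eq_succ hA hB hg hm hd, map_add, hg d (by omega), zero_add] at hexp
    rw [map_sub, ← hexp, add_sub_cancel_right]
  · intro h d
    rcases lt_or_ge (deg d) 2 with hd | hd
    · rw [coeff_expX_of_deg_lt_two hA hB hg1 hd, map_add, hP d hd, add_zero]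
    · obtain ⟨m, hm, hdm⟩ : ∃ m, 1 ≤ m ∧ deg d = m + 1 := ⟨deg d - 1, by omega, by omega⟩
      have hrec := HT_eq_HT_iff.1 ((h m hm).trans HT_sub) d hdm
      rw [coeff_expX_of_deg_eq_succ hA hB hg hm hdm, hrec, map_add, map_sub,
        hg d (by omega)]
      ring

/-- The recursion of the theorem, stated for the series `A = Σ aₙ`, `B = Σ bₙ`. -/
def IsGeneratorRecursion (p q A B : F2) : Prop :=
  ∀ m ≥ 1,
    HT (m + 1) A = HT (m + 1) p - HT (m + 1) (expPartialSum m (truncDeg m A) (truncDeg m B) Xv) ∧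
    HT (m + 1) B = HT (m + 1) q - HT (m + 1) (expPartialSum m (truncDeg m A) (truncDeg m B) Yv)

lemma expX_eq_iff_isGeneratorRecursion {p q A B : F2} (hA : ordGE A 2) (hB : ordGE B 2)
    (hp : ordGE p 2) (hq : ordGE q 2) :
    expX A B Xv = Xv + p ∧ expX A B Yv = Yv + q ↔ IsGeneratorRecursion p q A B := by
  rw [expX_eq_add_iff (g := Xv) hA hB (fun _ => coeff_X_of_deg_ne_one 0) hp,
    expX_eq_add_iff (g := Yv) hA hB (fun _ => coeff_X_of_deg_ne_one 1) hq, vf_Xv, vf_Yv,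
    IsGeneratorRecursion]
  exact forall₂_and.symm

/-- The recursion determines `HT (m + 1)` from the parts of degree `≤ m`. -/
lemma IsGeneratorRecursion.unique {p q A B A' B' : F2} (hA : ordGE A 2) (hB : ordGE B 2)
    (hA' : ordGE A' 2) (hB' : ordGE B' 2) (h : IsGeneratorRecursion p q A B)
    (h' : IsGeneratorRecursion p q A' B') : A = A' ∧ B = B' := by
  have hHT : ∀ n, HT n A = HT n A' ∧ HT n B = HT n B' := by
    intro n
    induction n using Nat.strong_induction_on with
    | _ n ih =>
      rcases lt_or_ge n 2 with hn | hn
      · simp only [HT_eq_zero hA hn, HT_eq_zero hB hn, HT_eq_zero hA' hn, HT_eq_zero hB' hn,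
          and_self]
      · obtain ⟨m, hm, rfl⟩ : ∃ m, 1 ≤ m ∧ n = m + 1 := ⟨n - 1, by omega, by omega⟩
        rw [(h m hm).1, (h m hm).2, (h' m hm).1, (h' m hm).2,
          truncDeg_congr fun k hk => (ih k (by omega)).1,
          truncDeg_congr fun k hk => (ih k (by omega)).2]
        exact ⟨rfl, rfl⟩
  exact ⟨eq_of_forall_HT_eq fun n => (hHT n).1, eq_of_forall_HT_eq fun n => (hHT n).2⟩

section totalize

variable {a : ℕ → F2}

lemma coeff_totalize (d : Fin 2 →₀ ℕ) : coeff d (totalize a) = coeff d (a (deg d)) := rfl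

lemma ordGE_totalize (ha : ∀ n < 2, a n = 0) : ordGE (totalize a) 2 :=
  fun d hd => by rw [coeff_totalize, ha _ hd, map_zero]

lemma HT_totalize (ha : ∀ n, ∀ d : Fin 2 →₀ ℕ, deg d ≠ n → coeff d (a n) = 0) (n : ℕ) :
    HT n (totalize a) = a n := by
  ext d
  rw [coeff_HT]
  split_ifs with hd
  · rw [coeff_totalize, hd]
  · exact (ha n d hd).symm

end totalize

/-- the recursion
a_{m+1} = p_{m+1} - HT_{m+1}(Σ_{j=2}^m (1/j!) X_m^j(x)),
b_{m+1} = q_{m+1} - HT_{m+1}(Σ_{j=2}^m (1/j!) X_m^j(y)),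
with X_m = Σ_{n=2}^m (a_n ∂/∂x + b_n ∂/∂y), produces the unique formal vector field X of
order ≥ 2 with Exp(X) = G = (x + p, y + q): the infinitesimal generator of G. -/
theorem infinitesimal_generator (p q : F2) (hp : ordGE p 2) (hq : ordGE q 2)
    (a b : ℕ → F2)
    (hahom : ∀ n, ∀ d : Fin 2 →₀ ℕ, deg d ≠ n → MvPowerSeries.coeff d (a n) = 0)
    (hbhom : ∀ n, ∀ d : Fin 2 →₀ ℕ, deg d ≠ n → MvPowerSeries.coeff d (b n) = 0)
    (ha01 : ∀ n < 2, a n = 0) (hb01 : ∀ n < 2, b n = 0)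
    (hrec : ∀ m ≥ 1,
      a (m + 1) = HT (m + 1) p -
        HT (m + 1) (∑ j ∈ Finset.Icc 2 m, ((j.factorial : ℂ))⁻¹ •
          (vf (∑ n ∈ Finset.Icc 2 m, a n) (∑ n ∈ Finset.Icc 2 m, b n))^[j] Xv) ∧
      b (m + 1) = HT (m + 1) q -
        HT (m + 1) (∑ j ∈ Finset.Icc 2 m, ((j.factorial : ℂ))⁻¹ •
          (vf (∑ n ∈ Finset.Icc 2 m, a n) (∑ n ∈ Finset.Icc 2 m, b n))^[j] Yv)) :
    ordGE (totalize a) 2 ∧ ordGE (totalize b) 2 ∧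
    expX (totalize a) (totalize b) Xv = Xv + p ∧
    expX (totalize a) (totalize b) Yv = Yv + q ∧
    (∀ a' b' : F2, ordGE a' 2 → ordGE b' 2 →
      expX a' b' Xv = Xv + p → expX a' b' Yv = Yv + q →
      a' = totalize a ∧ b' = totalize b) := by
  have hA : ordGE (totalize a) 2 := ordGE_totalize ha01
  have hB : ordGE (totalize b) 2 := ordGE_totalize hb01
  have hrec' : IsGeneratorRecursion p q (totalize a) (totalize b) := by
    intro m hm
    simp only [truncDeg, HT_totalize hahom, HT_totalize hbhom]
    exact hrec m hm
  obtain ⟨hx, hy⟩ := (expX_eq_iff_isGeneratorRecursion hA hB hp hq).2 hrec'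
  refine ⟨hA, hB, hx, hy, fun a' b' ha' hb' hx' hy' => ?_⟩
  exact ((expX_eq_iff_isGeneratorRecursion ha' hb' hp hq).1 ⟨hx', hy'⟩).unique ha' hb' hA hB hrec'

end
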